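/- Soundness: for all sets Γ, Δ of formulas, every formula φ, and each sign * ∈ {+,−}, if Γ;Δ ⊢*_{N2Int*} φ then Γ;Δ ⊩* φ. -/

import Mathlib

/-- Signs: `pos` for proof/assertion, `neg` for refutation/rejection. -/
inductive Sign where
  | pos
  | neg
deriving DecidableEq

/-- The dual of a sign. -/
def Sign.dual : Sign → Sign
  | .pos => .neg
  | .neg => .pos

/-- Formulas of the bilateral logic 2Int. -/
inductive Form where
  | atom : ℕ → Form
  | bot : Form
  | top : Form
  | and : Form → Form → Form
  | or : Form → Form → Form
  | imp : Form → Form → Form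
  | coimp : Form → Form → Form
deriving DecidableEq

/-- A premise of an atomic rule: the sign required (proof or refutation), the premise atom,
and the sets of dischargeable atomic proof assumptions and refutation assumptions. -/
structure Premise where
  sign : Sign
  concl : ℕ
  dischargePf : Set ℕ
  dischargeRf : Set ℕ

/-- An atomic rule: a list of premises, a marking as proof (`pos`) or refutation (`neg`) rule,
and an atomic conclusion. -/
structure AtomicRule where
  prems : List Premise
  sign : Sign
  concl : ℕ

/-- A bilateral atomic system (base) is a set of atomic rules. -/
abbrev Base := Set AtomicRule

/-- `AtDeriv B s Γ Δ p` formalizes `Γ;Δ ⊢^s_B p`: there is a deduction in `B` of the atom `p`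
whose open atomic proof assumptions are contained in `Γ` and open atomic refutation
assumptions in `Δ`, consisting of a single assumption of sign `s` or ending with a rule of
sign `s`. -/
inductive AtDeriv (B : Base) : Sign → Set ℕ → Set ℕ → ℕ → Prop
  | hypPos {Γ Δ : Set ℕ} {p : ℕ} : p ∈ Γ → AtDeriv B .pos Γ Δ p
  | hypNeg {Γ Δ : Set ℕ} {p : ℕ} : p ∈ Δ → AtDeriv B .neg Γ Δ p
  | app {Γ Δ : Set ℕ} {R : AtomicRule} (hR : R ∈ B)
      (h : ∀ pr ∈ R.prems,
        AtDeriv B pr.sign (Γ ∪ pr.dischargePf) (Δ ∪ pr.dischargeRf) pr.concl) :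
      AtDeriv B R.sign Γ Δ R.concl

/-- Bilateral validity (support) `⊩^s_B φ`, by recursion on the formula. -/
def Supp : Form → Base → Sign → Prop
  | .atom p, B, s => AtDeriv B s ∅ ∅ p
  | .bot, B, .pos => ∀ p : ℕ, AtDeriv B .pos ∅ ∅ p ∧ AtDeriv B .neg ∅ ∅ p
  | .bot, _, .neg => True
  | .top, _, .pos => True
  | .top, B, .neg => ∀ p : ℕ, AtDeriv B .pos ∅ ∅ p ∧ AtDeriv B .neg ∅ ∅ p
  | .and φ ψ, B, .pos => Supp φ B .pos ∧ Supp ψ B .pos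
  | .and φ ψ, B, .neg => ∀ C : Base, B ⊆ C → ∀ p : ℕ,
      (((∀ D : Base, C ⊆ D → Supp φ D .neg → AtDeriv D .pos ∅ ∅ p) ∧
        (∀ D : Base, C ⊆ D → Supp ψ D .neg → AtDeriv D .pos ∅ ∅ p)) →
        AtDeriv C .pos ∅ ∅ p) ∧
      (((∀ D : Base, C ⊆ D → Supp φ D .neg → AtDeriv D .neg ∅ ∅ p) ∧
        (∀ D : Base, C ⊆ D → Supp ψ D .neg → AtDeriv D .neg ∅ ∅ p)) →
        AtDeriv C .neg ∅ ∅ p)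
  | .or φ ψ, B, .pos => ∀ C : Base, B ⊆ C → ∀ p : ℕ,
      (((∀ D : Base, C ⊆ D → Supp φ D .pos → AtDeriv D .pos ∅ ∅ p) ∧
        (∀ D : Base, C ⊆ D → Supp ψ D .pos → AtDeriv D .pos ∅ ∅ p)) →
        AtDeriv C .pos ∅ ∅ p) ∧
      (((∀ D : Base, C ⊆ D → Supp φ D .pos → AtDeriv D .neg ∅ ∅ p) ∧
        (∀ D : Base, C ⊆ D → Supp ψ D .pos → AtDeriv D .neg ∅ ∅ p)) →
        AtDeriv C .neg ∅ ∅ p)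
  | .or φ ψ, B, .neg => Supp φ B .neg ∧ Supp ψ B .neg
  | .imp φ ψ, B, .pos => ∀ C : Base, B ⊆ C → Supp φ C .pos → Supp ψ C .pos
  | .imp φ ψ, B, .neg => Supp φ B .pos ∧ Supp ψ B .neg
  | .coimp φ ψ, B, .pos => Supp φ B .pos ∧ Supp ψ B .neg
  | .coimp φ ψ, B, .neg => ∀ C : Base, B ⊆ C → Supp ψ C .neg → Supp φ C .neg

open Classical in
/-- `Cons B Γ Δ s χ` formalizes `Γ;Δ ⊩^s_B χ`. -/
def Cons (B : Base) (Γ Δ : Set Form) (s : Sign) (χ : Form) : Prop :=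
  if Γ = ∅ ∧ Δ = ∅ then Supp χ B s
  else ∀ C : Base, B ⊆ C →
    (∀ φ ∈ Γ, Supp φ C .pos) → (∀ ψ ∈ Δ, Supp ψ C .neg) → Supp χ C s

/-- `Γ;Δ ⊩^s χ` : consequence in every base. -/
def Valid (Γ Δ : Set Form) (s : Sign) (χ : Form) : Prop :=
  ∀ B : Base, Cons B Γ Δ s χ

/-- Natural deduction for 2Int: `ND true` is N2Int*, `ND false` is N2Int. -/
inductive ND (star : Bool) : Set Form → Set Form → Sign → Form → Prop
  | hypPos {Γ Δ : Set Form} {φ : Form} : φ ∈ Γ → ND star Γ Δ .pos φ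
  | hypNeg {Γ Δ : Set Form} {φ : Form} : φ ∈ Δ → ND star Γ Δ .neg φ
  | topI {Γ Δ : Set Form} : ND star Γ Δ .pos .top
  | botI {Γ Δ : Set Form} : ND star Γ Δ .neg .bot
  | andI {Γ Δ : Set Form} {φ ψ : Form} : ND star Γ Δ .pos φ → ND star Γ Δ .pos ψ →
      ND star Γ Δ .pos (φ.and ψ)
  | andE1 {Γ Δ : Set Form} {φ ψ : Form} : ND star Γ Δ .pos (φ.and ψ) → ND star Γ Δ .pos φ
  | andE2 {Γ Δ : Set Form} {φ ψ : Form} : ND star Γ Δ .pos (φ.and ψ) → ND star Γ Δ .pos ψ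
  | orI1 {Γ Δ : Set Form} {φ ψ : Form} : ND star Γ Δ .pos φ → ND star Γ Δ .pos (φ.or ψ)
  | orI2 {Γ Δ : Set Form} {φ ψ : Form} : ND star Γ Δ .pos ψ → ND star Γ Δ .pos (φ.or ψ)
  | impI {Γ Δ : Set Form} {φ ψ : Form} : ND star (insert φ Γ) Δ .pos ψ → ND star Γ Δ .pos (φ.imp ψ)
  | impE {Γ Δ : Set Form} {φ ψ : Form} : ND star Γ Δ .pos (φ.imp ψ) → ND star Γ Δ .pos φ →
      ND star Γ Δ .pos ψ
  | coimpI {Γ Δ : Set Form} {φ ψ : Form} : ND star Γ Δ .pos φ → ND star Γ Δ .neg ψ →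
      ND star Γ Δ .pos (φ.coimp ψ)
  | coimpE1 {Γ Δ : Set Form} {φ ψ : Form} : ND star Γ Δ .pos (φ.coimp ψ) → ND star Γ Δ .pos φ
  | coimpE2 {Γ Δ : Set Form} {φ ψ : Form} : ND star Γ Δ .pos (φ.coimp ψ) → ND star Γ Δ .neg ψ
  | orIneg {Γ Δ : Set Form} {φ ψ : Form} : ND star Γ Δ .neg φ → ND star Γ Δ .neg ψ →
      ND star Γ Δ .neg (φ.or ψ)
  | orE1neg {Γ Δ : Set Form} {φ ψ : Form} : ND star Γ Δ .neg (φ.or ψ) → ND star Γ Δ .neg φ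
  | orE2neg {Γ Δ : Set Form} {φ ψ : Form} : ND star Γ Δ .neg (φ.or ψ) → ND star Γ Δ .neg ψ
  | andI1neg {Γ Δ : Set Form} {φ ψ : Form} : ND star Γ Δ .neg φ → ND star Γ Δ .neg (φ.and ψ)
  | andI2neg {Γ Δ : Set Form} {φ ψ : Form} : ND star Γ Δ .neg ψ → ND star Γ Δ .neg (φ.and ψ)
  | coimpIneg {Γ Δ : Set Form} {φ ψ : Form} : ND star Γ (insert ψ Δ) .neg φ →
      ND star Γ Δ .neg (φ.coimp ψ)
  | coimpEneg {Γ Δ : Set Form} {φ ψ : Form} : ND star Γ Δ .neg (φ.coimp ψ) → ND star Γ Δ .neg ψ →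
      ND star Γ Δ .neg φ
  | impIneg {Γ Δ : Set Form} {φ ψ : Form} : ND star Γ Δ .pos φ → ND star Γ Δ .neg ψ →
      ND star Γ Δ .neg (φ.imp ψ)
  | impE1neg {Γ Δ : Set Form} {φ ψ : Form} : ND star Γ Δ .neg (φ.imp ψ) → ND star Γ Δ .pos φ
  | impE2neg {Γ Δ : Set Form} {φ ψ : Form} : ND star Γ Δ .neg (φ.imp ψ) → ND star Γ Δ .neg ψ
  | orE {Γ Δ : Set Form} {φ ψ χ : Form} {s : Sign} (hs : star = true ∨ s = Sign.pos) :
      ND star Γ Δ .pos (φ.or ψ) → ND star (insert φ Γ) Δ s χ →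
      ND star (insert ψ Γ) Δ s χ → ND star Γ Δ s χ
  | botE {Γ Δ : Set Form} {χ : Form} {s : Sign} (hs : star = true ∨ s = Sign.pos) :
      ND star Γ Δ .pos .bot → ND star Γ Δ s χ
  | andEneg {Γ Δ : Set Form} {φ ψ χ : Form} {s : Sign} (hs : star = true ∨ s = Sign.neg) :
      ND star Γ Δ .neg (φ.and ψ) → ND star Γ (insert φ Δ) s χ →
      ND star Γ (insert ψ Δ) s χ → ND star Γ Δ s χ
  | topEneg {Γ Δ : Set Form} {χ : Form} {s : Sign} (hs : star = true ∨ s = Sign.neg) :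
      ND star Γ Δ .neg .top → ND star Γ Δ s χ


/-!
Soundness is proved by induction on derivations, showing that every base supporting the open
assumptions supports the conclusion. Two facts about support carry the argument. First, support is
monotone under extension of the base, which validates the rules that discharge assumptions.
Second, the clauses for `φ ∨ ψ` (proof) and `φ ∧ ψ` (refutation) are elimination principles
only for atomic conclusions. By induction on `χ`, they extend to an arbitrary conclusion `χ` of
either sign, and this validates `E∨(+)` and `E∧(−)`. Similarly, a base that proves and refutes
every atom supports every formula with either sign, which validates `⊥(+)` and `⊤(−)`.
-/

theorem AtDeriv.mono {B C : Base} {s : Sign} {Γ Δ : Set ℕ} {p : ℕ}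
    (d : AtDeriv B s Γ Δ p) (hBC : B ⊆ C) : AtDeriv C s Γ Δ p := by
  induction d with
  | hypPos h => exact .hypPos h
  | hypNeg h => exact .hypNeg h
  | app hR _ ih => exact .app (hBC hR) ih

theorem Supp.mono {χ : Form} {s : Sign} {B C : Base} (h : Supp χ B s) (hBC : B ⊆ C) :
    Supp χ C s := by
  induction χ generalizing s B C with
  | atom p => exact AtDeriv.mono h hBC
  | bot | top =>
    cases s <;> first | trivial | exact fun p => ⟨(h p).1.mono hBC, (h p).2.mono hBC⟩
  | and _ _ ih₁ ih₂ | or _ _ ih₁ ih₂ | imp _ _ ih₁ ih₂ | coimp _ _ ih₁ ih₂ =>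
    cases s <;>
      first | exact ⟨ih₁ h.1 hBC, ih₂ h.2 hBC⟩ | exact fun D hD => h D (hBC.trans hD)

theorem supp_of_supp_bot {B : Base} {χ : Form} {s : Sign} (h : Supp .bot B .pos) :
    Supp χ B s := by
  induction χ generalizing s B with
  | atom p => cases s with
    | pos => exact (h p).1
    | neg => exact (h p).2
  | bot | top => cases s <;> first | exact h | trivial
  | and _ _ ih₁ ih₂ | or _ _ ih₁ ih₂ | imp _ _ ih₁ ih₂ | coimp _ _ ih₁ ih₂ =>
    cases s <;> first
      | exact ⟨ih₁ h, ih₂ h⟩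
      | exact fun C hC _ => ih₂ (h.mono hC)
      | exact fun C hC _ => ih₁ (h.mono hC)
      | exact fun C hC p => ⟨fun _ => (h p).1.mono hC, fun _ => (h p).2.mono hC⟩

/-- The atomic elimination clause shared by `⊩⁺ φ ∨ ψ` (`t = .pos`) and `⊩⁻ φ ∧ ψ`
(`t = .neg`). -/
def SuppEither (t : Sign) (φ ψ : Form) (B : Base) : Prop :=
  ∀ C : Base, B ⊆ C → ∀ (p : ℕ) (s : Sign),
    (∀ D : Base, C ⊆ D → Supp φ D t → AtDeriv D s ∅ ∅ p) →
    (∀ D : Base, C ⊆ D → Supp ψ D t → AtDeriv D s ∅ ∅ p) → AtDeriv C s ∅ ∅ p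

theorem supp_or_pos_iff {φ ψ : Form} {B : Base} :
    Supp (φ.or ψ) B .pos ↔ SuppEither .pos φ ψ B := by
  refine ⟨fun h C hC p s hφ hψ => ?_, fun h C hC p => ⟨fun H => h C hC p _ H.1 H.2,
    fun H => h C hC p _ H.1 H.2⟩⟩
  cases s
  · exact (h C hC p).1 ⟨hφ, hψ⟩
  · exact (h C hC p).2 ⟨hφ, hψ⟩

theorem supp_and_neg_iff {φ ψ : Form} {B : Base} :
    Supp (φ.and ψ) B .neg ↔ SuppEither .neg φ ψ B := by
  refine ⟨fun h C hC p s hφ hψ => ?_, fun h C hC p => ⟨fun H => h C hC p _ H.1 H.2,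
    fun H => h C hC p _ H.1 H.2⟩⟩
  cases s
  · exact (h C hC p).1 ⟨hφ, hψ⟩
  · exact (h C hC p).2 ⟨hφ, hψ⟩

namespace SuppEither

variable {t : Sign} {φ ψ : Form} {B : Base}

theorem mono (h : SuppEither t φ ψ B) {C : Base} (hBC : B ⊆ C) : SuppEither t φ ψ C :=
  fun D hD => h D (hBC.trans hD)

theorem of_left (h : Supp φ B t) : SuppEither t φ ψ B :=
  fun C hC _ _ hφ _ => hφ C subset_rfl (h.mono hC)

theorem of_right (h : Supp ψ B t) : SuppEither t φ ψ B :=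
  fun C hC _ _ _ hψ => hψ C subset_rfl (h.mono hC)

theorem elim_suppEither {t' : Sign} {χ₁ χ₂ : Form} (h : SuppEither t φ ψ B)
    (hφ : ∀ C : Base, B ⊆ C → Supp φ C t → SuppEither t' χ₁ χ₂ C)
    (hψ : ∀ C : Base, B ⊆ C → Supp ψ C t → SuppEither t' χ₁ χ₂ C) :
    SuppEither t' χ₁ χ₂ B := by
  intro C hC p s H₁ H₂
  exact h C hC p s
    (fun D hD hφD => hφ D (hC.trans hD) hφD D subset_rfl p s (fun E hE => H₁ E (hD.trans hE))
      (fun E hE => H₂ E (hD.trans hE)))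
    (fun D hD hψD => hψ D (hC.trans hD) hψD D subset_rfl p s (fun E hE => H₁ E (hD.trans hE))
      (fun E hE => H₂ E (hD.trans hE)))

theorem elim (h : SuppEither t φ ψ B) {χ : Form} {s : Sign}
    (hφ : ∀ C : Base, B ⊆ C → Supp φ C t → Supp χ C s)
    (hψ : ∀ C : Base, B ⊆ C → Supp ψ C t → Supp χ C s) : Supp χ B s := by
  induction χ generalizing s B with
  | atom p => exact h B subset_rfl p s hφ hψ
  | bot | top =>
    cases s <;> first
      | trivial
      | exact fun p => ⟨h B subset_rfl p _ (fun C hC hC' => (hφ C hC hC' p).1)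
            (fun C hC hC' => (hψ C hC hC' p).1),
          h B subset_rfl p _ (fun C hC hC' => (hφ C hC hC' p).2)
            (fun C hC hC' => (hψ C hC hC' p).2)⟩
  | and _ _ ih₁ ih₂ | or _ _ ih₁ ih₂ | imp _ _ ih₁ ih₂ | coimp _ _ ih₁ ih₂ =>
    -- refuting `χ₁ ∧ χ₂` and proving `χ₁ ∨ χ₂` are themselves `SuppEither` clauses
    cases s <;> first
      | exact ⟨ih₁ h (fun C hC hC' => (hφ C hC hC').1) (fun C hC hC' => (hψ C hC hC').1),
          ih₂ h (fun C hC hC' => (hφ C hC hC').2) (fun C hC hC' => (hψ C hC hC').2)⟩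
      | exact supp_and_neg_iff.2 (h.elim_suppEither
          (fun C hC hC' => supp_and_neg_iff.1 (hφ C hC hC'))
          (fun C hC hC' => supp_and_neg_iff.1 (hψ C hC hC')))
      | exact supp_or_pos_iff.2 (h.elim_suppEither
          (fun C hC hC' => supp_or_pos_iff.1 (hφ C hC hC'))
          (fun C hC hC' => supp_or_pos_iff.1 (hψ C hC hC')))
      | exact fun C hC hχ => ih₂ (h.mono hC)
          (fun D hD hD' => hφ D (hC.trans hD) hD' D subset_rfl (hχ.mono hD))
          (fun D hD hD' => hψ D (hC.trans hD) hD' D subset_rfl (hχ.mono hD))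
      | exact fun C hC hχ => ih₁ (h.mono hC)
          (fun D hD hD' => hφ D (hC.trans hD) hD' D subset_rfl (hχ.mono hD))
          (fun D hD hD' => hψ D (hC.trans hD) hD' D subset_rfl (hχ.mono hD))

end SuppEither

def Models (B : Base) (Γ Δ : Set Form) : Prop :=
  (∀ γ ∈ Γ, Supp γ B .pos) ∧ (∀ δ ∈ Δ, Supp δ B .neg)

namespace Models

variable {B : Base} {Γ Δ : Set Form}

theorem mono (h : Models B Γ Δ) {C : Base} (hBC : B ⊆ C) : Models C Γ Δ :=
  ⟨fun γ hγ => (h.1 γ hγ).mono hBC, fun δ hδ => (h.2 δ hδ).mono hBC⟩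

theorem insert_pos (h : Models B Γ Δ) {φ : Form} (hφ : Supp φ B .pos) :
    Models B (insert φ Γ) Δ :=
  ⟨Set.forall_mem_insert.2 ⟨hφ, h.1⟩, h.2⟩

theorem insert_neg (h : Models B Γ Δ) {φ : Form} (hφ : Supp φ B .neg) :
    Models B Γ (insert φ Δ) :=
  ⟨h.1, Set.forall_mem_insert.2 ⟨hφ, h.2⟩⟩

end Models

theorem supp_of_nd {star : Bool} {Γ Δ : Set Form} {s : Sign} {φ : Form} (h : ND star Γ Δ s φ)
    {B : Base} (hB : Models B Γ Δ) : Supp φ B s := by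
  induction h generalizing B with
  | hypPos hφ => exact hB.1 _ hφ
  | hypNeg hφ => exact hB.2 _ hφ
  | topI | botI => trivial
  | andI _ _ ih₁ ih₂ | coimpI _ _ ih₁ ih₂ | orIneg _ _ ih₁ ih₂ | impIneg _ _ ih₁ ih₂ =>
    exact ⟨ih₁ hB, ih₂ hB⟩
  | andE1 _ ih | coimpE1 _ ih | orE1neg _ ih | impE1neg _ ih => exact (ih hB).1
  | andE2 _ ih | coimpE2 _ ih | orE2neg _ ih | impE2neg _ ih => exact (ih hB).2
  | orI1 _ ih => exact supp_or_pos_iff.2 (.of_left (ih hB))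
  | orI2 _ ih => exact supp_or_pos_iff.2 (.of_right (ih hB))
  | andI1neg _ ih => exact supp_and_neg_iff.2 (.of_left (ih hB))
  | andI2neg _ ih => exact supp_and_neg_iff.2 (.of_right (ih hB))
  | impI _ ih => exact fun C hC hφ => ih ((hB.mono hC).insert_pos hφ)
  | coimpIneg _ ih => exact fun C hC hψ => ih ((hB.mono hC).insert_neg hψ)
  | impE _ _ ih₁ ih₂ | coimpEneg _ _ ih₁ ih₂ => exact ih₁ hB B subset_rfl (ih₂ hB)
  | orE _ _ _ _ ih ih₁ ih₂ =>
    exact (supp_or_pos_iff.1 (ih hB)).elim (fun C hC hφ => ih₁ ((hB.mono hC).insert_pos hφ))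
      (fun C hC hψ => ih₂ ((hB.mono hC).insert_pos hψ))
  | andEneg _ _ _ _ ih ih₁ ih₂ =>
    exact (supp_and_neg_iff.1 (ih hB)).elim (fun C hC hφ => ih₁ ((hB.mono hC).insert_neg hφ))
      (fun C hC hψ => ih₂ ((hB.mono hC).insert_neg hψ))
  | botE _ _ ih | topEneg _ _ ih => exact supp_of_supp_bot (ih hB)

theorem cons_of_forall_models {B : Base} {Γ Δ : Set Form} {s : Sign} {χ : Form}
    (h : ∀ C : Base, B ⊆ C → Models C Γ Δ → Supp χ C s) : Cons B Γ Δ s χ := by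
  unfold Cons
  split_ifs with hΓΔ
  · exact h B subset_rfl ⟨by simp [hΓΔ.1], by simp [hΓΔ.2]⟩
  · exact fun C hC hΓ hΔ => h C hC ⟨hΓ, hΔ⟩

theorem soundness (Γ Δ : Set Form) (φ : Form) (s : Sign)
    (h : ND true Γ Δ s φ) : Valid Γ Δ s φ :=
  fun _ => cons_of_forall_models fun _ _ hC => supp_of_nd h hC
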